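/- Assume the complex-valued linear system Σ is stabilizable and {P₁,P₂} is the unique positive definite bimatrix solution of the bimatrix Riccati equation. Then the iterates {P₁(k),P₂(k)} starting from {P₁(0),P₂(0)} = {Q,0} converge: P₁(k) → P₁ and P₂(k) → P₂ (entrywise) as k → ∞. -/

import Mathlib

/-!
Passing to the augmented matrix `[[P₁, P₂^#], [P₂, P₁^#]]` turns bimatrices into ordinary complex
matrices: products, `^H`, inverses and positive definiteness are preserved, and the bimatrix
Riccati recursion becomes the matrix recursion `X ↦ Q + AᴴXA - AᴴXB (R + BᴴXB)⁻¹ BᴴXA`.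
Completing the square shows that this map is the minimum over feedback gains `L` of the
closed-loop costs `Q + LᴴRL + (A + BL)ᴴX(A + BL)`, each monotone in `X`; so it is monotone on
positive semidefinite matrices. Started at `Q`, the iterates therefore increase and stay below
the positive definite solution `P`, hence converge; the limit is again a positive definite
solution, which by uniqueness is `P`.
-/

open Matrix Filter Topology
open scoped ENNReal ComplexOrder

noncomputable section

/-- Entrywise complex conjugate of a matrix, `M^#`. -/
def mconj {k l : Type*} (A : Matrix k l ℂ) : Matrix k l ℂ := A.map (starRingEnd ℂ)

/-- A bimatrix `{A₁, A₂}` of `k × l` complex matrices. -/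
structure Bimatrix (k l : ℕ) where
  fst : Matrix (Fin k) (Fin l) ℂ
  snd : Matrix (Fin k) (Fin l) ℂ

namespace Bimatrix

variable {k l p : ℕ}

/-- The action of a bimatrix on a vector: `{A₁,A₂}x = A₁x + A₂^# x^#`. -/
def apply (A : Bimatrix k l) (x : Fin l → ℂ) : Fin k → ℂ :=
  A.fst *ᵥ x + mconj A.snd *ᵥ star x

/-- Bimatrix product `{A₁,A₂}{B₁,B₂} = {A₁B₁ + A₂^#B₂, A₁^#B₂ + A₂B₁}`. -/
def mul (A : Bimatrix k l) (B : Bimatrix l p) : Bimatrix k p :=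
  ⟨A.fst * B.fst + mconj A.snd * B.snd, mconj A.fst * B.snd + A.snd * B.fst⟩

/-- Bimatrix conjugate transpose `{A₁,A₂}^H = {A₁^H, A₂^T}`. -/
def conjT (A : Bimatrix k l) : Bimatrix l k :=
  ⟨A.fst.conjTranspose, A.snd.transpose⟩

def add (A B : Bimatrix k l) : Bimatrix k l := ⟨A.fst + B.fst, A.snd + B.snd⟩

def sub (A B : Bimatrix k l) : Bimatrix k l := ⟨A.fst - B.fst, A.snd - B.snd⟩

def neg (A : Bimatrix k l) : Bimatrix k l := ⟨-A.fst, -A.snd⟩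

/-- The identity bimatrix `{I, 0}`. -/
def one (k : ℕ) : Bimatrix k k := ⟨1, 0⟩

/-- A bimatrix is Hermitian if `P₁^H = P₁` and `P₂^T = P₂`. -/
def IsHermitian (P : Bimatrix k k) : Prop :=
  P.fst.conjTranspose = P.fst ∧ P.snd.transpose = P.snd

/-- The real quadratic form `Re (x^H P₁ x + x^H P₂^# x^#)` of a bimatrix. -/
def quadForm (P : Bimatrix k k) (x : Fin k → ℂ) : ℝ :=
  (star x ⬝ᵥ P.apply x).re

/-- Positive semidefinite bimatrix. -/
def PosSemidef (P : Bimatrix k k) : Prop :=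
  P.IsHermitian ∧ ∀ x : Fin k → ℂ, 0 ≤ P.quadForm x

/-- Positive definite bimatrix. -/
def PosDef (P : Bimatrix k k) : Prop :=
  P.IsHermitian ∧ (∀ x : Fin k → ℂ, 0 ≤ P.quadForm x) ∧
    ∀ x : Fin k → ℂ, x ≠ 0 → 0 < P.quadForm x

/-- The Loewner-type order on bimatrices: `X ≤ Y` iff `Y - X ≥ 0`. -/
def le (X Y : Bimatrix k k) : Prop := PosSemidef (Y.sub X)

/-- `T` is the (two-sided) inverse of the bimatrix `S`. -/
def IsInv (S T : Bimatrix k k) : Prop := S.mul T = one k ∧ T.mul S = one k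

/-- The complex-matrix representation of a bimatrix. -/
def toMat (S : Bimatrix k k) : Matrix (Fin k ⊕ Fin k) (Fin k ⊕ Fin k) ℂ :=
  fromBlocks S.fst (mconj S.snd) S.snd (mconj S.fst)

/-- The inverse of a bimatrix, extracted from the inverse of its complex-matrix
representation.  When `S` is invertible as a bimatrix, `S.inv` is its genuine inverse. -/
def inv (S : Bimatrix k k) : Bimatrix k k :=
  ⟨(toMat S)⁻¹.toBlocks₁₁, (toMat S)⁻¹.toBlocks₂₁⟩

end Bimatrix

variable {n m : ℕ}

/-- The complex-valued linear system `x(k+1) = {A₁,A₂}x(k) + {B₁,B₂}u(k)` is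
stabilizable if some full state feedback `u(k) = K₁x(k) + K₂^#x^#(k)` drives every
closed-loop solution to zero. -/
def Stabilizable (A : Bimatrix n n) (B : Bimatrix n m) : Prop :=
  ∃ K : Bimatrix m n, ∀ x : ℕ → (Fin n → ℂ),
    (∀ k : ℕ, x (k + 1) = A.apply (x k) + B.apply (K.apply (x k))) →
    Tendsto x atTop (𝓝 0)

/-- `{S₁,S₂} = {R,0} + {B₁,B₂}^H {P₁,P₂} {B₁,B₂}`. -/
def Smat (B : Bimatrix n m) (R : Matrix (Fin m) (Fin m) ℂ) (P : Bimatrix n n) :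
    Bimatrix m m :=
  (Bimatrix.mk R 0).add (B.conjT.mul (P.mul B))

/-- The bimatrix Riccati equation
`-{Q,0} = {A}^H{P}{A} - {P} - {A}^H{P}{B}{S}⁻¹{B}^H{P}{A}`, where
`{S} = {R,0} + {B}^H{P}{B}` is required to be invertible. -/
def RiccatiEq (A : Bimatrix n n) (B : Bimatrix n m)
    (Q : Matrix (Fin n) (Fin n) ℂ) (R : Matrix (Fin m) (Fin m) ℂ)
    (P : Bimatrix n n) : Prop :=
  ∃ T : Bimatrix m m, (Smat B R P).IsInv T ∧
    (Bimatrix.mk Q 0).neg =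
      ((A.conjT.mul (P.mul A)).sub P).sub
        (A.conjT.mul (P.mul (B.mul (T.mul (B.conjT.mul (P.mul A))))))

/-- The Riccati iteration `{P(0)} = {Q,0}`,
`{P(k+1)} = {Q,0} + {A}^H{P(k)}{A} - {A}^H{P(k)}{B}{S(k)}⁻¹{B}^H{P(k)}{A}`, where
`{S(k)} = {R,0} + {B}^H{P(k)}{B}`. -/
def riccatiIter (A : Bimatrix n n) (B : Bimatrix n m)
    (Q : Matrix (Fin n) (Fin n) ℂ) (R : Matrix (Fin m) (Fin m) ℂ) : ℕ → Bimatrix n n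
  | 0 => ⟨Q, 0⟩
  | k + 1 =>
    let P := riccatiIter A B Q R k
    ((Bimatrix.mk Q 0).add (A.conjT.mul (P.mul A))).sub
      (A.conjT.mul (P.mul (B.mul ((Smat B R P).inv.mul (B.conjT.mul (P.mul A))))))

open scoped MatrixOrder

lemma Complex.exists_tendsto_of_monotone_of_le {z : ℕ → ℂ} (hz : Monotone z) {w : ℂ}
    (hw : ∀ k, z k ≤ w) : ∃ c, Tendsto z atTop (𝓝 c) := by
  have hre : Monotone fun k => (z k).re := fun j k h => (Complex.le_def.1 (hz h)).1
  have him : ∀ k, (z k).im = (z 0).im := fun k => ((Complex.le_def.1 (hz k.zero_le)).2).symm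
  have hbdd : BddAbove (Set.range fun k => (z k).re) :=
    ⟨w.re, Set.forall_mem_range.2 fun k => (Complex.le_def.1 (hw k)).1⟩
  exact ⟨_, (((Complex.continuous_ofReal.tendsto _).comp (tendsto_atTop_ciSup hre hbdd)).add_const
    ((z 0).im * Complex.I)).congr fun k => by rw [Function.comp_apply, ← him k, Complex.re_add_im]⟩

namespace Matrix

section Order

variable {ν : Type*} [Fintype ν]

lemma isClosed_setOf_posSemidef : IsClosed {M : Matrix ν ν ℂ | M.PosSemidef} := by
  simp_rw [posSemidef_iff_dotProduct_mulVec, Set.ofPred_and, Set.ofPred_forall]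
  exact (isClosed_eq continuous_id.matrix_conjTranspose continuous_id).inter
    (isClosed_iInter fun x => isClosed_le continuous_const (by fun_prop))

instance : OrderClosedTopology (Matrix ν ν ℂ) where
  isClosed_le' := isClosed_setOf_posSemidef.preimage (continuous_snd.sub continuous_fst)

lemma dotProduct_mulVec_mono {X Y : Matrix ν ν ℂ} (h : X ≤ Y) (v : ν → ℂ) :
    star v ⬝ᵥ X *ᵥ v ≤ star v ⬝ᵥ Y *ᵥ v := by
  simpa [sub_mulVec, dotProduct_sub] using (le_iff.mp h).dotProduct_mulVec_nonneg v

lemma dotProduct_mulVec_polarization (M : Matrix ν ν ℂ) (u v : ν → ℂ) :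
    star u ⬝ᵥ M *ᵥ v =
      (star (u + v) ⬝ᵥ M *ᵥ (u + v) - star u ⬝ᵥ M *ᵥ u - star v ⬝ᵥ M *ᵥ v) / 2
        - Complex.I * (star (u + Complex.I • v) ⬝ᵥ M *ᵥ (u + Complex.I • v)
          - star u ⬝ᵥ M *ᵥ u - star v ⬝ᵥ M *ᵥ v) / 2 := by
  simp only [star_add, star_smul, add_dotProduct, mulVec_add, dotProduct_add, mulVec_smul,
    smul_dotProduct, dotProduct_smul, smul_eq_mul, Complex.star_def, Complex.conj_I]
  linear_combination
    (star u ⬝ᵥ M *ᵥ v - star v ⬝ᵥ M *ᵥ u - Complex.I * star v ⬝ᵥ M *ᵥ v) / 2 * Complex.I_mul_I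

theorem exists_tendsto_of_monotone_of_le [DecidableEq ν] {X : ℕ → Matrix ν ν ℂ}
    (hX : Monotone X) {P : Matrix ν ν ℂ} (hP : ∀ k, X k ≤ P) :
    ∃ Z, Tendsto X atTop (𝓝 Z) := by
  have hform : ∀ v : ν → ℂ, ∃ c, Tendsto (fun k => star v ⬝ᵥ X k *ᵥ v) atTop (𝓝 c) :=
    fun v => Complex.exists_tendsto_of_monotone_of_le
      (fun j k h => dotProduct_mulVec_mono (hX h) v) fun k => dotProduct_mulVec_mono (hP k) v
  choose c hc using hform
  let e : ν → ν → ℂ := fun i => Pi.single i 1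
  refine ⟨of fun i j => (c (e i + e j) - c (e i) - c (e j)) / 2
    - Complex.I * (c (e i + Complex.I • e j) - c (e i) - c (e j)) / 2,
    tendsto_pi_nhds.2 fun i => tendsto_pi_nhds.2 fun j => ?_⟩
  have hentry : ∀ k, X k i j = star (e i) ⬝ᵥ X k *ᵥ e j := fun k => by
    rw [mulVec_single_one, Pi.star_single, star_one, single_one_dotProduct]; rfl
  exact (((((hc _).sub (hc _)).sub (hc _)).div_const 2).sub
    (((((hc _).sub (hc _)).sub (hc _)).const_mul Complex.I).div_const 2)).congr fun k =>
      ((hentry k).trans (dotProduct_mulVec_polarization _ _ _)).symm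

end Order

section Riccati

variable {ν μ : Type*} [Fintype ν] [Fintype μ]
variable (A : Matrix ν ν ℂ) (B : Matrix ν μ ℂ) (Q : Matrix ν ν ℂ) (R : Matrix μ μ ℂ)

def riccatiS (X : Matrix ν ν ℂ) : Matrix μ μ ℂ := R + Bᴴ * X * B

def closedLoopCost (X : Matrix ν ν ℂ) (L : Matrix μ ν ℂ) : Matrix ν ν ℂ :=
  Q + Lᴴ * R * L + (A + B * L)ᴴ * X * (A + B * L)

def riccatiOp [DecidableEq μ] (X : Matrix ν ν ℂ) : Matrix ν ν ℂ :=
  Q + Aᴴ * X * A - Aᴴ * X * B * (riccatiS B R X)⁻¹ * (Bᴴ * X * A)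

def riccatiGain [DecidableEq μ] (X : Matrix ν ν ℂ) : Matrix μ ν ℂ :=
  -((riccatiS B R X)⁻¹ * (Bᴴ * X * A))

variable {A B Q R}

lemma riccatiS_posDef (hR : R.PosDef) {X : Matrix ν ν ℂ} (hX : 0 ≤ X) :
    (riccatiS B R X).PosDef :=
  hR.add_posSemidef (hX.posSemidef.conjTranspose_mul_mul_same B)

lemma closedLoopCost_mono {X Y : Matrix ν ν ℂ} (h : X ≤ Y) (L : Matrix μ ν ℂ) :
    closedLoopCost A B Q R X L ≤ closedLoopCost A B Q R Y L := by
  have hdiff : closedLoopCost A B Q R Y L - closedLoopCost A B Q R X L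
      = (A + B * L)ᴴ * (Y - X) * (A + B * L) := by
    simp only [closedLoopCost, Matrix.mul_sub, Matrix.sub_mul]
    abel
  rw [le_iff, hdiff]
  exact (le_iff.mp h).conjTranspose_mul_mul_same _

variable [DecidableEq μ]

lemma closedLoopCost_sub_riccatiOp {X : Matrix ν ν ℂ} (hX : X.IsHermitian) (hR : R.IsHermitian)
    (hS : IsUnit (riccatiS B R X)) (L : Matrix μ ν ℂ) :
    closedLoopCost A B Q R X L - riccatiOp A B Q R X
      = (L - riccatiGain A B R X)ᴴ * riccatiS B R X * (L - riccatiGain A B R X) := by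
  set S := riccatiS B R X with hSdef
  have hSH : Sᴴ = S := by simp [hSdef, riccatiS, conjTranspose_mul, hX.eq, hR.eq, Matrix.mul_assoc]
  have hdet : IsUnit S.det := (isUnit_iff_isUnit_det S).1 hS
  have hSiH : (S⁻¹)ᴴ = S⁻¹ := by rw [conjTranspose_nonsing_inv, hSH]
  simp only [riccatiGain, closedLoopCost, riccatiOp, ← hSdef, sub_neg_eq_add, conjTranspose_add,
    conjTranspose_mul, hSiH, hX.eq, conjTranspose_conjTranspose, Matrix.add_mul, Matrix.mul_add,
    Matrix.mul_assoc, nonsing_inv_mul_cancel_left _ _ hdet, mul_nonsing_inv_cancel_left _ _ hdet]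
  simp only [hSdef, riccatiS, Matrix.add_mul, Matrix.mul_add, Matrix.mul_assoc]
  abel

lemma riccatiOp_eq_closedLoopCost (hR : R.PosDef) {X : Matrix ν ν ℂ} (hX : 0 ≤ X) :
    riccatiOp A B Q R X = closedLoopCost A B Q R X (riccatiGain A B R X) := by
  have h := closedLoopCost_sub_riccatiOp (A := A) (B := B) (Q := Q) hX.posSemidef.isHermitian
    hR.isHermitian (riccatiS_posDef hR hX).isUnit (riccatiGain A B R X)
  rw [sub_self, conjTranspose_zero, Matrix.zero_mul, Matrix.zero_mul, sub_eq_zero] at h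
  exact h.symm

lemma riccatiOp_le_closedLoopCost (hR : R.PosDef) {X : Matrix ν ν ℂ} (hX : 0 ≤ X)
    (L : Matrix μ ν ℂ) : riccatiOp A B Q R X ≤ closedLoopCost A B Q R X L := by
  rw [le_iff, closedLoopCost_sub_riccatiOp hX.posSemidef.isHermitian hR.isHermitian
    (riccatiS_posDef hR hX).isUnit]
  exact (riccatiS_posDef hR hX).posSemidef.conjTranspose_mul_mul_same _

lemma le_riccatiOp (hR : R.PosDef) {X : Matrix ν ν ℂ} (hX : 0 ≤ X) : Q ≤ riccatiOp A B Q R X := by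
  rw [riccatiOp_eq_closedLoopCost hR hX, closedLoopCost]
  exact le_add_of_le_of_nonneg
    (le_add_of_nonneg_right (hR.posSemidef.conjTranspose_mul_mul_same _).nonneg)
    (hX.posSemidef.conjTranspose_mul_mul_same _).nonneg

lemma riccatiOp_mono (hR : R.PosDef) {X Y : Matrix ν ν ℂ} (hX : 0 ≤ X) (hXY : X ≤ Y) :
    riccatiOp A B Q R X ≤ riccatiOp A B Q R Y :=
  calc riccatiOp A B Q R X ≤ closedLoopCost A B Q R X (riccatiGain A B R Y) :=
        riccatiOp_le_closedLoopCost hR hX _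
    _ ≤ closedLoopCost A B Q R Y (riccatiGain A B R Y) := closedLoopCost_mono hXY _
    _ = riccatiOp A B Q R Y := (riccatiOp_eq_closedLoopCost hR (hX.trans hXY)).symm

lemma continuousAt_riccatiOp (hR : R.PosDef) {X : Matrix ν ν ℂ} (hX : 0 ≤ X) :
    ContinuousAt (riccatiOp A B Q R) X := by
  have hdet : (riccatiS B R X).det ≠ 0 := (riccatiS_posDef hR hX).det_pos.ne'
  have hinv : ContinuousAt (fun Y => (riccatiS B R Y)⁻¹) X := by
    refine (continuousAt_matrix_inv _ ?_).comp (f := riccatiS B R)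
      (by unfold riccatiS; fun_prop)
    simpa only [Ring.inverse_eq_inv'] using continuousAt_inv₀ hdet
  unfold riccatiOp
  fun_prop

lemma le_riccatiOp_iterate (hQ : 0 ≤ Q) (hR : R.PosDef) (k : ℕ) :
    Q ≤ (riccatiOp A B Q R)^[k] Q := by
  induction k with
  | zero => exact le_rfl
  | succ k ih =>
    rw [Function.iterate_succ_apply']
    exact le_riccatiOp hR (hQ.trans ih)

lemma monotone_riccatiOp_iterate (hQ : 0 ≤ Q) (hR : R.PosDef) :
    Monotone fun k => (riccatiOp A B Q R)^[k] Q := by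
  refine monotone_nat_of_le_succ fun k => ?_
  induction k with
  | zero => exact le_riccatiOp hR hQ
  | succ k ih =>
    rw [Function.iterate_succ_apply', Function.iterate_succ_apply' _ (k + 1)]
    exact riccatiOp_mono hR (hQ.trans (le_riccatiOp_iterate hQ hR k)) ih

lemma riccatiOp_iterate_le (hQ : 0 ≤ Q) (hR : R.PosDef) {P : Matrix ν ν ℂ} (hP : 0 ≤ P)
    (hfix : riccatiOp A B Q R P = P) (k : ℕ) : (riccatiOp A B Q R)^[k] Q ≤ P := by
  induction k with
  | zero => exact hfix ▸ le_riccatiOp hR hP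
  | succ k ih =>
    rw [Function.iterate_succ_apply', ← hfix]
    exact riccatiOp_mono hR (hQ.trans (le_riccatiOp_iterate hQ hR k)) ih

theorem exists_tendsto_riccatiOp_iterate [DecidableEq ν] (hQ : 0 ≤ Q) (hR : R.PosDef)
    {P : Matrix ν ν ℂ} (hP : 0 ≤ P) (hfix : riccatiOp A B Q R P = P) :
    ∃ Z, Tendsto (fun k => (riccatiOp A B Q R)^[k] Q) atTop (𝓝 Z) ∧ Q ≤ Z ∧
      riccatiOp A B Q R Z = Z := by
  obtain ⟨Z, hZ⟩ := exists_tendsto_of_monotone_of_le (monotone_riccatiOp_iterate hQ hR)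
    (riccatiOp_iterate_le hQ hR hP hfix)
  have hQZ : Q ≤ Z := ge_of_tendsto' hZ (le_riccatiOp_iterate hQ hR)
  refine ⟨Z, hZ, hQZ, tendsto_nhds_unique ?_ ((tendsto_add_atTop_iff_nat 1).2 hZ)⟩
  simpa only [Function.iterate_succ_apply', Function.comp_def] using
    (continuousAt_riccatiOp hR (hQ.trans hQZ)).tendsto.comp hZ

end Riccati

end Matrix

section mconj

variable {ι κ ρ : Type*}

@[simp] lemma mconj_apply (M : Matrix ι κ ℂ) (i : ι) (j : κ) : mconj M i j = star (M i j) := rfl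

@[simp] lemma mconj_mconj (M : Matrix ι κ ℂ) : mconj (mconj M) = M := by ext; simp

@[simp] lemma mconj_zero : mconj (0 : Matrix ι κ ℂ) = 0 := by ext; simp

@[simp] lemma mconj_one [DecidableEq ι] : mconj (1 : Matrix ι ι ℂ) = 1 := by
  ext i j; by_cases h : i = j <;> simp [one_apply, h]

@[simp] lemma mconj_add (M N : Matrix ι κ ℂ) : mconj (M + N) = mconj M + mconj N := by ext; simp

@[simp] lemma mconj_neg (M : Matrix ι κ ℂ) : mconj (-M) = -mconj M := by ext; simp

@[simp] lemma mconj_mul [Fintype κ] (M : Matrix ι κ ℂ) (N : Matrix κ ρ ℂ) :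
    mconj (M * N) = mconj M * mconj N :=
  Matrix.map_mul

@[simp] lemma mconj_transpose (M : Matrix ι κ ℂ) : mconj Mᵀ = Mᴴ := rfl

@[simp] lemma mconj_conjTranspose (M : Matrix ι κ ℂ) : mconj Mᴴ = Mᵀ := by ext; simp

@[simp] lemma conjTranspose_mconj (M : Matrix ι κ ℂ) : (mconj M)ᴴ = Mᵀ := by ext; simp

lemma mconj_inv [Fintype ι] [DecidableEq ι] (M : Matrix ι ι ℂ) : mconj M⁻¹ = (mconj M)⁻¹ := by
  have h (X : Matrix ι ι ℂ) : mconj X = Xᵀᴴ := by rw [← mconj_transpose, transpose_transpose]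
  rw [h, h, transpose_nonsing_inv, conjTranspose_nonsing_inv]

lemma mconj_mulVec_star [Fintype κ] (M : Matrix ι κ ℂ) (x : κ → ℂ) :
    mconj M *ᵥ star x = star (M *ᵥ x) := by
  ext i; simp [mulVec, dotProduct, star_sum]

lemma continuous_mconj : Continuous (mconj : Matrix ι κ ℂ → Matrix ι κ ℂ) :=
  continuous_id.matrix_map Complex.continuous_conj

end mconj

namespace Bimatrix

variable {k l p : ℕ}

/-- The rectangular version of `Bimatrix.toMat`. -/
def augMatrix (A : Bimatrix k l) : Matrix (Fin k ⊕ Fin k) (Fin l ⊕ Fin l) ℂ :=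
  fromBlocks A.fst (mconj A.snd) A.snd (mconj A.fst)

def augVec (x : Fin k → ℂ) : Fin k ⊕ Fin k → ℂ := Sum.elim x (star x)

lemma augMatrix_injective : Function.Injective (augMatrix : Bimatrix k l → _) := by
  rintro ⟨A₁, A₂⟩ ⟨B₁, B₂⟩ h
  have h₁ := congrArg toBlocks₁₁ h
  have h₂ := congrArg toBlocks₂₁ h
  simp only [augMatrix, toBlocks_fromBlocks₁₁, toBlocks_fromBlocks₂₁] at h₁ h₂
  rw [h₁, h₂]

lemma augMatrix_add (A B : Bimatrix k l) : augMatrix (A.add B) = augMatrix A + augMatrix B := by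
  simp [augMatrix, Bimatrix.add, fromBlocks_add]

lemma augMatrix_sub (A B : Bimatrix k l) : augMatrix (A.sub B) = augMatrix A - augMatrix B := by
  simp [augMatrix, Bimatrix.sub, sub_eq_add_neg, fromBlocks_add, fromBlocks_neg]

lemma augMatrix_neg (A : Bimatrix k l) : augMatrix A.neg = -augMatrix A := by
  simp [augMatrix, Bimatrix.neg, fromBlocks_neg]

lemma augMatrix_mul (A : Bimatrix k l) (B : Bimatrix l p) :
    augMatrix (A.mul B) = augMatrix A * augMatrix B := by
  simp only [augMatrix, Bimatrix.mul, fromBlocks_multiply, mconj_add, mconj_mul, mconj_mconj]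
  abel_nf

lemma augMatrix_conjT (A : Bimatrix k l) : augMatrix A.conjT = (augMatrix A)ᴴ := by
  simp [augMatrix, Bimatrix.conjT, fromBlocks_conjTranspose]

lemma augMatrix_one : augMatrix (one k) = 1 := by
  simp [augMatrix, Bimatrix.one, fromBlocks_one]

lemma mconj_augMatrix_submatrix_sumComm (S : Bimatrix k l) :
    (mconj (augMatrix S)).submatrix (Equiv.sumComm _ _) (Equiv.sumComm _ _) = augMatrix S := by
  ext (i | i) (j | j) <;> simp [augMatrix]

/-- Augmented matrices are fixed by `M ↦ (mconj M).submatrix swap swap`, which commutes with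
inversion. -/
lemma augMatrix_inv (S : Bimatrix k k) : augMatrix S.inv = (augMatrix S)⁻¹ := by
  set N := (augMatrix S)⁻¹ with hNdef
  have hN : (mconj N).submatrix (Equiv.sumComm _ _) (Equiv.sumComm _ _) = N := by
    rw [hNdef, mconj_inv, ← inv_submatrix_equiv, mconj_augMatrix_submatrix_sumComm]
  show fromBlocks N.toBlocks₁₁ (mconj N.toBlocks₂₁) N.toBlocks₂₁ (mconj N.toBlocks₁₁) = N
  ext (i | i) (j | j)
  · simp [toBlocks₁₁]
  · simpa [toBlocks₂₁] using congrFun (congrFun hN (.inl i)) (.inr j)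
  · simp [toBlocks₂₁]
  · simpa [toBlocks₁₁] using congrFun (congrFun hN (.inr i)) (.inr j)

lemma augMatrix_mulVec_augVec (A : Bimatrix k l) (x : Fin l → ℂ) :
    augMatrix A *ᵥ augVec x = augVec (A.apply x) := by
  simp only [augMatrix, augVec, fromBlocks_mulVec, Sum.elim_comp_inl, Sum.elim_comp_inr, apply,
    star_add, ← mconj_mulVec_star, mconj_mconj, star_star, add_comm (A.snd *ᵥ x)]

lemma star_augVec_dotProduct (x y : Fin k → ℂ) :
    star (augVec x) ⬝ᵥ augVec y = star x ⬝ᵥ y + star (star x ⬝ᵥ y) := by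
  simp [augVec, dotProduct, Fintype.sum_sum_type, star_sum, mul_comm]

lemma star_augVec_dotProduct_augMatrix_mulVec (P : Bimatrix k k) (x y : Fin k → ℂ) :
    star (augVec x) ⬝ᵥ augMatrix P *ᵥ augVec y
      = star x ⬝ᵥ P.apply y + star (star x ⬝ᵥ P.apply y) := by
  rw [augMatrix_mulVec_augVec, star_augVec_dotProduct]

lemma star_augVec_dotProduct_augMatrix_mulVec_self (P : Bimatrix k k) (x : Fin k → ℂ) :
    star (augVec x) ⬝ᵥ augMatrix P *ᵥ augVec x = ((2 * P.quadForm x : ℝ) : ℂ) := by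
  rw [star_augVec_dotProduct_augMatrix_mulVec, Complex.star_def, Complex.add_conj]
  rfl

lemma exists_eq_augVec_add_I_smul (z : Fin k ⊕ Fin k → ℂ) :
    ∃ x y : Fin k → ℂ, z = augVec x + Complex.I • augVec y := by
  refine ⟨fun i => (z (.inl i) + star (z (.inr i))) / 2,
    fun i => -Complex.I * (z (.inl i) - star (z (.inr i))) / 2, ?_⟩
  ext (i | i)
  · simp only [augVec, Pi.add_apply, Pi.smul_apply, Sum.elim_inl, smul_eq_mul]
    linear_combination (z (.inl i) - star (z (.inr i))) / 2 * Complex.I_mul_I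
  · simp only [augVec, Pi.add_apply, Pi.smul_apply, Sum.elim_inr, Pi.star_apply, smul_eq_mul,
      star_div₀, star_add, star_mul', star_neg, star_sub, Complex.star_def, Complex.conj_conj,
      Complex.conj_I, Complex.conj_ofNat]
    linear_combination (z (.inr i) - starRingEnd ℂ (z (.inl i))) / 2 * Complex.I_mul_I

lemma isHermitian_augMatrix_iff {P : Bimatrix k k} :
    (augMatrix P).IsHermitian ↔ P.IsHermitian := by
  rw [Matrix.IsHermitian, ← augMatrix_conjT, augMatrix_injective.eq_iff]
  cases P
  simp [Bimatrix.conjT, Bimatrix.IsHermitian]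

lemma IsHermitian.star_dotProduct_augMatrix_mulVec {P : Bimatrix k k} (hP : P.IsHermitian)
    (x y : Fin k → ℂ) :
    star (augVec x + Complex.I • augVec y) ⬝ᵥ augMatrix P *ᵥ (augVec x + Complex.I • augVec y)
      = ((2 * (P.quadForm x + P.quadForm y) : ℝ) : ℂ) := by
  have hM := isHermitian_augMatrix_iff.2 hP
  -- `⟪augVec x, M augVec y⟫ = s + star s` is real, so the two cross terms cancel.
  have hcross : star (augVec y) ⬝ᵥ augMatrix P *ᵥ augVec x
      = star (augVec x) ⬝ᵥ augMatrix P *ᵥ augVec y := by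
    conv_lhs => rw [star_dotProduct, star_mulVec, hM.eq, ← dotProduct_mulVec]
    rw [star_augVec_dotProduct_augMatrix_mulVec, star_add, star_star, add_comm]
  simp only [star_add, star_smul, add_dotProduct, mulVec_add, dotProduct_add, mulVec_smul,
    smul_dotProduct, dotProduct_smul, smul_eq_mul, Complex.star_def, Complex.conj_I, hcross,
    star_augVec_dotProduct_augMatrix_mulVec_self]
  push_cast
  linear_combination (-(2 * (P.quadForm y : ℂ))) * Complex.I_mul_I

lemma posDef_mk_zero {Q : Matrix (Fin k) (Fin k) ℂ} (hQ : Q.PosDef) :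
    (Bimatrix.mk Q 0).PosDef := by
  have hq (x : Fin k → ℂ) : (Bimatrix.mk Q 0).quadForm x = (star x ⬝ᵥ Q *ᵥ x).re := by
    simp [quadForm, apply]
  refine ⟨⟨hQ.isHermitian, transpose_zero⟩, fun x => ?_, fun x hx => ?_⟩
  · rw [hq]; exact (Complex.le_def.1 (hQ.posSemidef.dotProduct_mulVec_nonneg x)).1
  · rw [hq]; exact (Complex.lt_def.1 (hQ.dotProduct_mulVec_pos hx)).1

theorem posDef_augMatrix_iff {P : Bimatrix k k} : (augMatrix P).PosDef ↔ P.PosDef := by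
  constructor
  · intro h
    refine ⟨isHermitian_augMatrix_iff.1 h.isHermitian, fun x => ?_, fun x hx => ?_⟩
    · have := h.posSemidef.dotProduct_mulVec_nonneg (augVec x)
      rw [star_augVec_dotProduct_augMatrix_mulVec_self, Complex.zero_le_real] at this
      linarith
    · have hx' : augVec x ≠ 0 := fun h0 => hx (funext fun i => congrFun h0 (.inl i))
      have := h.dotProduct_mulVec_pos hx'
      rw [star_augVec_dotProduct_augMatrix_mulVec_self, Complex.zero_lt_real] at this
      linarith
  · rintro ⟨hH, hnonneg, hpos⟩
    refine .of_dotProduct_mulVec_pos (isHermitian_augMatrix_iff.2 hH) fun z hz => ?_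
    obtain ⟨x, y, rfl⟩ := exists_eq_augVec_add_I_smul z
    rw [hH.star_dotProduct_augMatrix_mulVec, Complex.zero_lt_real]
    by_cases hx : x = 0
    · have hy : y ≠ 0 := by rintro rfl; simp [hx, augVec] at hz
      linarith [hnonneg x, hpos y hy]
    · linarith [hpos x hx, hnonneg y]

lemma isClosed_range_augMatrix : IsClosed (Set.range (augMatrix : Bimatrix k l → _)) := by
  have hrange : Set.range (augMatrix : Bimatrix k l → _) = {M | fromBlocks M.toBlocks₁₁
      (mconj M.toBlocks₂₁) M.toBlocks₂₁ (mconj M.toBlocks₁₁) = M} := by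
    ext M
    constructor
    · rintro ⟨A, rfl⟩
      rfl
    · intro h
      exact ⟨⟨M.toBlocks₁₁, M.toBlocks₂₁⟩, h⟩
  have h₁₁ : Continuous (toBlocks₁₁ : Matrix (Fin k ⊕ Fin k) (Fin l ⊕ Fin l) ℂ → _) :=
    continuous_id.matrix_submatrix _ _
  have h₂₁ : Continuous (toBlocks₂₁ : Matrix (Fin k ⊕ Fin k) (Fin l ⊕ Fin l) ℂ → _) :=
    continuous_id.matrix_submatrix _ _
  rw [hrange]
  exact isClosed_eq (h₁₁.matrix_fromBlocks (continuous_mconj.comp h₂₁) h₂₁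
    (continuous_mconj.comp h₁₁)) continuous_id

lemma tendsto_fst_snd_of_tendsto_augMatrix {α : Type*} {f : Filter α} {X : α → Bimatrix k l}
    {P : Bimatrix k l} (h : Tendsto (fun a => augMatrix (X a)) f (𝓝 (augMatrix P))) :
    Tendsto (fun a => (X a).fst) f (𝓝 P.fst) ∧ Tendsto (fun a => (X a).snd) f (𝓝 P.snd) :=
  ⟨((continuous_id.matrix_submatrix Sum.inl Sum.inl).tendsto _).comp h,
    ((continuous_id.matrix_submatrix Sum.inr Sum.inl).tendsto _).comp h⟩

end Bimatrix

section Transfer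

open Bimatrix

lemma augMatrix_smat (B : Bimatrix n m) (R : Matrix (Fin m) (Fin m) ℂ) (P : Bimatrix n n) :
    augMatrix (Smat B R P) = riccatiS (augMatrix B) (augMatrix ⟨R, 0⟩) (augMatrix P) := by
  rw [Smat, augMatrix_add, augMatrix_mul, augMatrix_mul, augMatrix_conjT, riccatiS,
    Matrix.mul_assoc]

lemma augMatrix_riccatiIter (A : Bimatrix n n) (B : Bimatrix n m)
    (Q : Matrix (Fin n) (Fin n) ℂ) (R : Matrix (Fin m) (Fin m) ℂ) (k : ℕ) :
    augMatrix (riccatiIter A B Q R k)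
      = (riccatiOp (augMatrix A) (augMatrix B) (augMatrix ⟨Q, 0⟩) (augMatrix ⟨R, 0⟩))^[k]
          (augMatrix ⟨Q, 0⟩) := by
  induction k with
  | zero => rfl
  | succ k ih =>
    rw [Function.iterate_succ_apply', ← ih, riccatiIter]
    simp only [augMatrix_sub, augMatrix_add, augMatrix_mul, augMatrix_conjT, augMatrix_inv,
      augMatrix_smat, riccatiOp, Matrix.mul_assoc]

theorem riccatiEq_iff {A : Bimatrix n n} {B : Bimatrix n m} {Q : Matrix (Fin n) (Fin n) ℂ}
    {R : Matrix (Fin m) (Fin m) ℂ} {P : Bimatrix n n} (hS : IsUnit (augMatrix (Smat B R P))) :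
    RiccatiEq A B Q R P ↔
      riccatiOp (augMatrix A) (augMatrix B) (augMatrix ⟨Q, 0⟩) (augMatrix ⟨R, 0⟩) (augMatrix P)
        = augMatrix P := by
  have hdet := (isUnit_iff_isUnit_det _).1 hS
  have heq {T : Bimatrix m m} (hT : augMatrix T = (augMatrix (Smat B R P))⁻¹) :
      (Bimatrix.mk Q 0).neg = ((A.conjT.mul (P.mul A)).sub P).sub
          (A.conjT.mul (P.mul (B.mul (T.mul (B.conjT.mul (P.mul A)))))) ↔
        riccatiOp (augMatrix A) (augMatrix B) (augMatrix ⟨Q, 0⟩) (augMatrix ⟨R, 0⟩)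
          (augMatrix P) = augMatrix P := by
    rw [← augMatrix_injective.eq_iff]
    simp only [augMatrix_neg, augMatrix_sub, augMatrix_mul, augMatrix_conjT, hT, augMatrix_smat,
      riccatiOp, Matrix.mul_assoc]
    constructor <;> intro h <;> linear_combination (norm := abel) -h
  constructor
  · rintro ⟨T, ⟨hST, -⟩, h⟩
    exact (heq (inv_eq_right_inv (by rw [← augMatrix_mul, hST, augMatrix_one])).symm).1 h
  · intro h
    refine ⟨(Smat B R P).inv, ⟨augMatrix_injective ?_, augMatrix_injective ?_⟩,
      (heq (augMatrix_inv _)).2 h⟩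
    · rw [augMatrix_mul, augMatrix_inv, augMatrix_one, mul_nonsing_inv _ hdet]
    · rw [augMatrix_mul, augMatrix_inv, augMatrix_one, nonsing_inv_mul _ hdet]

end Transfer

theorem riccatiIter_tendsto_general
    (A : Bimatrix n n) (B : Bimatrix n m)
    (Q : Matrix (Fin n) (Fin n) ℂ) (R : Matrix (Fin m) (Fin m) ℂ)
    (hQ : Q.PosDef) (hR : R.PosDef)
    (P : Bimatrix n n) (hP : P.PosDef ∧ RiccatiEq A B Q R P)
    (huniq : ∀ P' : Bimatrix n n, P'.PosDef ∧ RiccatiEq A B Q R P' → P' = P) :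
    Tendsto (fun k => (riccatiIter A B Q R k).fst) atTop (𝓝 P.fst) ∧
    Tendsto (fun k => (riccatiIter A B Q R k).snd) atTop (𝓝 P.snd) := by
  obtain ⟨hPdef, hPeq⟩ := hP
  have hQ' := Bimatrix.posDef_augMatrix_iff.2 (Bimatrix.posDef_mk_zero hQ)
  have hR' := Bimatrix.posDef_augMatrix_iff.2 (Bimatrix.posDef_mk_zero hR)
  have hS {X : Bimatrix n n} (hX : 0 ≤ X.augMatrix) : IsUnit (Smat B R X).augMatrix := by
    rw [augMatrix_smat]
    exact (riccatiS_posDef hR' hX).isUnit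
  have hP0 : 0 ≤ P.augMatrix := (Bimatrix.posDef_augMatrix_iff.2 hPdef).posSemidef.nonneg
  obtain ⟨Z, hZ, hQZ, hZfix⟩ := exists_tendsto_riccatiOp_iterate hQ'.posSemidef.nonneg hR' hP0
    ((riccatiEq_iff (hS hP0)).1 hPeq)
  simp_rw [← augMatrix_riccatiIter] at hZ
  obtain ⟨P', rfl⟩ : Z ∈ Set.range Bimatrix.augMatrix :=
    Bimatrix.isClosed_range_augMatrix.mem_of_tendsto hZ (.of_forall fun k => ⟨_, rfl⟩)
  have hP'def : P'.PosDef := Bimatrix.posDef_augMatrix_iff.1 (add_sub_cancel _ P'.augMatrix ▸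
    hQ'.add_posSemidef (le_iff.1 hQZ))
  have hP'eq := (riccatiEq_iff (hS (hQ'.posSemidef.nonneg.trans hQZ))).2 hZfix
  obtain rfl := huniq P' ⟨hP'def, hP'eq⟩
  exact Bimatrix.tendsto_fst_snd_of_tendsto_augMatrix hZ

/-- If the system is stabilizable and `{P₁,P₂}` is the unique positive
definite solution of the bimatrix Riccati equation, then the Riccati iteration starting
from `{Q,0}` converges entrywise to `{P₁,P₂}`. -/
theorem riccatiIter_tendsto
    (A : Bimatrix n n) (B : Bimatrix n m)
    (Q : Matrix (Fin n) (Fin n) ℂ) (R : Matrix (Fin m) (Fin m) ℂ)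
    (hQ : Q.PosDef) (hR : R.PosDef)
    (hstab : Stabilizable A B)
    (P : Bimatrix n n) (hP : P.PosDef ∧ RiccatiEq A B Q R P)
    (huniq : ∀ P' : Bimatrix n n, P'.PosDef ∧ RiccatiEq A B Q R P' → P' = P) :
    Tendsto (fun k => (riccatiIter A B Q R k).fst) atTop (𝓝 P.fst) ∧
    Tendsto (fun k => (riccatiIter A B Q R k).snd) atTop (𝓝 P.snd) :=
  riccatiIter_tendsto_general A B Q R hQ hR P hP huniq
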